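/- Let π = a_1a_2⋯a_n ∈ S_n be 231-avoiding. For 1 ≤ i ≤ n, let c_i be defined by: a_{c_i+i} is the first letter to the right of a_i in the one-line notation of π with a_{c_i+i} > a_i, with the convention a_{n+1} = ∞ (so c_i = min{ j − i : i < j ≤ n+1, a_j > a_i }). Then F(Λ_π, q) = Π_{i=1}^{n} [c_i], where [k] = 1 + q + ⋯ + q^{k−1}. -/

import Mathlib

open Polynomial

namespace SepPerm

/-- The length (number of inversions) of a permutation of `Fin n`. -/
def invCount {n : ℕ} (π : Equiv.Perm (Fin n)) : ℕ :=
  (Finset.univ.filter fun p : Fin n × Fin n => p.1 < p.2 ∧ π p.2 < π p.1).card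

/-- The (right) weak Bruhat order: `u ≤ v` iff `ℓ(u) + ℓ(u⁻¹v) = ℓ(v)`. -/
def wle {n : ℕ} (u v : Equiv.Perm (Fin n)) : Prop :=
  invCount u + invCount (u⁻¹ * v) = invCount v

open scoped Classical in
/-- `F(Λ_π, q) = ∑_{u ≤ π} q^{ℓ(u)}`, rank generating function of `[id, π]`. -/
noncomputable def FLam {n : ℕ} (π : Equiv.Perm (Fin n)) : Polynomial ℤ :=
  ∑ u ∈ Finset.univ.filter (fun u => wle u π), X ^ invCount u

open scoped Classical in
/-- `F(V_π, q) = ∑_{v ≥ π} q^{ℓ(v) - ℓ(π)}`, rank generating function of `[π, w₀]`. -/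
noncomputable def FV {n : ℕ} (π : Equiv.Perm (Fin n)) : Polynomial ℤ :=
  ∑ v ∈ Finset.univ.filter (fun v => wle π v), X ^ (invCount v - invCount π)

/-- A permutation is separable iff it avoids the patterns 3142 and 2413. -/
def IsSeparable {n : ℕ} (π : Equiv.Perm (Fin n)) : Prop :=
  (¬ ∃ i j k h : Fin n, i < j ∧ j < k ∧ k < h ∧
      π j < π h ∧ π h < π i ∧ π i < π k) ∧
  (¬ ∃ i j k h : Fin n, i < j ∧ j < k ∧ k < h ∧
      π k < π i ∧ π i < π h ∧ π h < π j)

/-- The longest element `w₀ = n, n-1, …, 1`. -/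
def w0 (n : ℕ) : Equiv.Perm (Fin n) := Fin.revPerm

/-- The complement `π^c`, with `π^c(i) = n + 1 - π(i)` (one-indexed). -/
def compl {n : ℕ} (π : Equiv.Perm (Fin n)) : Equiv.Perm (Fin n) := w0 n * π

/-- `[k] = 1 + q + ⋯ + q^{k-1}`. -/
noncomputable def qnum (k : ℕ) : Polynomial ℤ := ∑ i ∈ Finset.range k, X ^ i

/-- `[N]! = [1][2]⋯[N]`. -/
noncomputable def qfact (N : ℕ) : Polynomial ℤ := ∏ k ∈ Finset.range N, qnum (k + 1)

/-- The inversion poset `P_π` on the letters: `x ≤_P y` iff `x ≤ y` and `π⁻¹x ≤ π⁻¹y`. -/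
def invLe {n : ℕ} (π : Equiv.Perm (Fin n)) (x y : Fin n) : Prop :=
  x ≤ y ∧ π⁻¹ x ≤ π⁻¹ y

/-- `σ` is a linear extension of the order `r`: whenever `i <_r j`, `i` precedes `j`
in the one-line notation of `σ` (i.e. the position `σ⁻¹ i` comes before `σ⁻¹ j`). -/
def IsLinExt {N : ℕ} (r : Fin N → Fin N → Prop) (σ : Equiv.Perm (Fin N)) : Prop :=
  ∀ i j, r i j → i ≠ j → σ.symm i < σ.symm j

open scoped Classical in
/-- `F(𝓛(P), q) = ∑_{σ ∈ 𝓛(P)} q^{ℓ(σ)}`, generating function of linear extensions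
by number of inversions. -/
noncomputable def FLin {N : ℕ} (r : Fin N → Fin N → Prop) : Polynomial ℤ :=
  ∑ σ ∈ Finset.univ.filter (fun σ => IsLinExt r σ), X ^ invCount σ

/-- `c_i` for `π = a_1 ⋯ a_n`: the distance from position `i` to the first position
to its right holding a larger letter, with the convention `a_{n+1} = ∞` (0-indexed:
if no `j > i` has `a_j > a_i`, then `c_i = n - i`). -/
def cval {n : ℕ} (π : Equiv.Perm (Fin n)) (i : Fin n) : ℕ :=
  (insert (n - (i : ℕ))
      ((Finset.univ.filter fun j : Fin n => i < j ∧ π i < π j).image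
        fun j : Fin n => (j : ℕ) - (i : ℕ))).min' (Finset.insert_nonempty _ _)

/-! Let `π ∈ S_{n+1}` avoid 231 and carry its largest letter at position `m`. Avoidance forces
every letter left of `m` to be smaller than every letter right of `m`. Hence deleting the largest
letter leaves a 231-avoiding `τ ∈ S_n` with the same `c_j` at the other letters, while
`c_m = n + 1 - m`. The right weak order is inclusion of left inversion sets, and `u ≤ π` holds
exactly when `u` is obtained from some `σ ≤ τ` by inserting the largest letter at a position
`p ≥ m`, which adds `n - p` inversions. So `F(Λ_π) = F(Λ_τ) · [n + 1 - m]`, and induction on `n`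
gives the product. -/

open Equiv Finset

variable {n : ℕ}

def leftInvSet (w : Perm (Fin n)) : Finset (Fin n × Fin n) :=
  univ.filter fun q => q.1 < q.2 ∧ w⁻¹ q.2 < w⁻¹ q.1

@[simp]
lemma mem_leftInvSet {w : Perm (Fin n)} {q : Fin n × Fin n} :
    q ∈ leftInvSet w ↔ q.1 < q.2 ∧ w⁻¹ q.2 < w⁻¹ q.1 := by
  simp [leftInvSet]

lemma invCount_eq_card_leftInvSet (w : Perm (Fin n)) : invCount w = #(leftInvSet w) :=
  card_equiv ((w.prodCongr w).trans (Equiv.prodComm _ _)) fun _ => by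
    simp [and_comm]

lemma mem_leftInvSet_sdiff {u v : Perm (Fin n)} {q : Fin n × Fin n} :
    q ∈ leftInvSet u \ leftInvSet v ↔ q.1 < q.2 ∧ v⁻¹ q.1 < v⁻¹ q.2 ∧ u⁻¹ q.2 < u⁻¹ q.1 := by
  simp only [mem_sdiff, mem_leftInvSet, not_and, not_lt]
  constructor
  · rintro ⟨⟨h12, hu⟩, hv⟩
    exact ⟨h12, (hv h12).lt_of_ne (v⁻¹.injective.ne h12.ne), hu⟩
  · rintro ⟨h12, hv, hu⟩
    exact ⟨⟨h12, hu⟩, fun _ => hv.le⟩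

lemma invCount_inv_mul (u v : Perm (Fin n)) :
    invCount (u⁻¹ * v) = #(leftInvSet u \ leftInvSet v) + #(leftInvSet v \ leftInvSet u) := by
  -- an inversion of `u⁻¹ * v` is a pair of letters that `u` and `v` put in opposite orders
  let S := univ.filter fun q : Fin n × Fin n => v⁻¹ q.1 < v⁻¹ q.2 ∧ u⁻¹ q.2 < u⁻¹ q.1
  have hS : invCount (u⁻¹ * v) = #S :=
    card_equiv (v.prodCongr v) fun _ => by
      simp only [S, mem_filter]
      simp
  have hlt : S.filter (fun q => q.1 < q.2) = leftInvSet u \ leftInvSet v := by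
    ext q
    simp only [S, mem_filter, mem_univ, true_and, mem_leftInvSet_sdiff]
    tauto
  have hnlt : #(S.filter fun q => ¬ q.1 < q.2) = #(leftInvSet v \ leftInvSet u) := by
    refine card_equiv (Equiv.prodComm _ _) fun q => ?_
    simp only [S, mem_filter, mem_univ, true_and, mem_leftInvSet_sdiff, Equiv.prodComm_apply,
      Prod.fst_swap, Prod.snd_swap, not_lt]
    constructor
    · rintro ⟨⟨hv, hu⟩, h21⟩
      exact ⟨h21.lt_of_ne fun h => hv.ne (by rw [h]), hu, hv⟩
    · rintro ⟨h21, hu, hv⟩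
      exact ⟨⟨hv, hu⟩, h21.le⟩
  rw [hS, ← card_filter_add_card_filter_not (fun q : Fin n × Fin n => q.1 < q.2), hlt, hnlt]

lemma wle_iff_subset {u v : Perm (Fin n)} : wle u v ↔ leftInvSet u ⊆ leftInvSet v := by
  rw [wle, invCount_inv_mul, invCount_eq_card_leftInvSet, invCount_eq_card_leftInvSet,
    ← sdiff_eq_empty_iff_subset, ← card_eq_zero]
  have hu := card_sdiff_add_card_inter (leftInvSet u) (leftInvSet v)
  have hv := card_sdiff_add_card_inter (leftInvSet v) (leftInvSet u)
  rw [inter_comm] at hv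
  omega

def insertMax (σ : Perm (Fin n)) (p : Fin (n + 1)) : Perm (Fin (n + 1)) :=
  ((finSuccEquiv' p).trans (Equiv.optionCongr σ)).trans finSuccEquivLast.symm

@[simp]
lemma insertMax_apply_self (σ : Perm (Fin n)) (p : Fin (n + 1)) : insertMax σ p p = Fin.last n := by
  simp [insertMax]

@[simp]
lemma insertMax_apply_succAbove (σ : Perm (Fin n)) (p : Fin (n + 1)) (j : Fin n) :
    insertMax σ p (p.succAbove j) = (σ j).castSucc := by
  simp [insertMax]

@[simp]
lemma insertMax_inv_last (σ : Perm (Fin n)) (p : Fin (n + 1)) :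
    (insertMax σ p)⁻¹ (Fin.last n) = p := by
  rw [Perm.inv_eq_iff_eq, insertMax_apply_self]

@[simp]
lemma insertMax_inv_castSucc (σ : Perm (Fin n)) (p : Fin (n + 1)) (b : Fin n) :
    (insertMax σ p)⁻¹ b.castSucc = p.succAbove (σ⁻¹ b) := by
  rw [Perm.inv_eq_iff_eq, insertMax_apply_succAbove]
  simp

lemma insertMax_bijective :
    Function.Bijective fun q : Perm (Fin n) × Fin (n + 1) => insertMax q.1 q.2 := by
  refine (Fintype.bijective_iff_injective_and_card _).mpr ⟨?_, ?_⟩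
  · rintro ⟨σ, p⟩ ⟨τ, m⟩ h
    obtain rfl : p = m := by simpa using congr($h⁻¹ (Fin.last n))
    refine congrArg (·, p) (Equiv.ext fun j => ?_)
    simpa using congr($h (p.succAbove j))
  · simp [Fintype.card_perm, Nat.factorial_succ, mul_comm]

def lettersFrom (w : Perm (Fin n)) (p : ℕ) : Finset (Fin n) :=
  univ.filter fun a => p ≤ (w⁻¹ a : ℕ)

@[simp]
lemma mem_lettersFrom {w : Perm (Fin n)} {p : ℕ} {a : Fin n} :
    a ∈ lettersFrom w p ↔ p ≤ (w⁻¹ a : ℕ) := by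
  simp [lettersFrom]

lemma card_lettersFrom (w : Perm (Fin n)) (p : ℕ) : #(lettersFrom w p) = n - p := by
  have hlt := card_filter_add_card_filter_not (s := univ) fun j : Fin n => (j : ℕ) < p
  rw [Fin.card_filter_val_lt, card_univ, Fintype.card_fin] at hlt
  have hle : #(lettersFrom w p) = #(univ.filter fun j : Fin n => ¬ (j : ℕ) < p) :=
    card_equiv w⁻¹ fun a => by simp
  omega

@[simp]
lemma castSucc_mem_leftInvSet_insertMax {σ : Perm (Fin n)} {p : Fin (n + 1)} {a b : Fin n} :
    (a.castSucc, b.castSucc) ∈ leftInvSet (insertMax σ p) ↔ (a, b) ∈ leftInvSet σ := by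
  simp [(Fin.strictMono_succAbove p).lt_iff_lt]

@[simp]
lemma castSucc_last_mem_leftInvSet_insertMax {σ : Perm (Fin n)} {p : Fin (n + 1)} {a : Fin n} :
    (a.castSucc, Fin.last n) ∈ leftInvSet (insertMax σ p) ↔ a ∈ lettersFrom σ p := by
  simp [Fin.lt_succAbove_iff_le_castSucc, Fin.le_def]

@[simp]
lemma last_notMem_leftInvSet_insertMax {σ : Perm (Fin n)} {p : Fin (n + 1)} {b : Fin (n + 1)} :
    (Fin.last n, b) ∉ leftInvSet (insertMax σ p) :=
  fun h => (Fin.le_last b).not_gt (mem_leftInvSet.mp h).1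

lemma leftInvSet_insertMax (σ : Perm (Fin n)) (p : Fin (n + 1)) :
    leftInvSet (insertMax σ p) =
      (leftInvSet σ).map (Fin.castSuccEmb.prodMap Fin.castSuccEmb) ∪
        (lettersFrom σ p).map (Fin.castSuccEmb.trans (.sectL _ (Fin.last n))) := by
  ext ⟨x, y⟩
  induction x using Fin.lastCases <;> induction y using Fin.lastCases <;>
    simp [-mem_leftInvSet, eq_comm (a := Fin.last n)]

lemma invCount_insertMax (σ : Perm (Fin n)) (p : Fin (n + 1)) :
    invCount (insertMax σ p) = invCount σ + (n - p) := by
  rw [invCount_eq_card_leftInvSet, invCount_eq_card_leftInvSet, leftInvSet_insertMax,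
    card_union_of_disjoint, card_map, card_map, card_lettersFrom]
  simp only [disjoint_left, mem_map]
  rintro _ ⟨q, -, rfl⟩ ⟨a, -, h⟩
  simp [Prod.ext_iff, (Fin.castSucc_lt_last _).ne'] at h

lemma leftInvSet_insertMax_subset_iff {σ τ : Perm (Fin n)} {p m : Fin (n + 1)} :
    leftInvSet (insertMax σ p) ⊆ leftInvSet (insertMax τ m) ↔
      leftInvSet σ ⊆ leftInvSet τ ∧ lettersFrom σ p ⊆ lettersFrom τ m := by
  constructor
  · intro h
    refine ⟨fun ⟨a, b⟩ hab => ?_, fun a ha => ?_⟩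
    · exact castSucc_mem_leftInvSet_insertMax.mp (h (castSucc_mem_leftInvSet_insertMax.mpr hab))
    · exact castSucc_last_mem_leftInvSet_insertMax.mp
        (h (castSucc_last_mem_leftInvSet_insertMax.mpr ha))
  · rintro ⟨h₁, h₂⟩ ⟨x, y⟩ hxy
    induction x using Fin.lastCases <;> induction y using Fin.lastCases <;>
      simp_all [-mem_leftInvSet, subset_iff]

lemma le_of_lettersFrom_subset {σ τ : Perm (Fin n)} {p m : ℕ} (hp : p ≤ n) (hm : m ≤ n)
    (h : lettersFrom σ p ⊆ lettersFrom τ m) : m ≤ p := by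
  have := card_le_card h
  rw [card_lettersFrom, card_lettersFrom] at this
  omega

def IsDirectSumAt (τ : Perm (Fin n)) (m : ℕ) : Prop :=
  ∀ j j' : Fin n, (j : ℕ) < m → m ≤ (j' : ℕ) → τ j < τ j'

lemma lettersFrom_subset_of_le {σ τ : Perm (Fin n)} {p m : ℕ} (hτ : IsDirectSumAt τ m)
    (hστ : leftInvSet σ ⊆ leftInvSet τ) (hmp : m ≤ p) : lettersFrom σ p ⊆ lettersFrom τ m := by
  intro a ha
  by_contra ha'
  rw [mem_lettersFrom] at ha ha'
  push Not at ha'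
  -- pigeonhole: the `n - m` letters of `lettersFrom τ m` would all have to follow `a` in `σ`
  have hsub : lettersFrom τ m ⊆ lettersFrom σ (σ⁻¹ a + 1) := by
    intro b hb
    rw [mem_lettersFrom] at hb ⊢
    have hab : a < b := by simpa using hτ _ _ ha' hb
    have hσab : ¬ σ⁻¹ b < σ⁻¹ a := fun h =>
      (mem_leftInvSet.mp (hστ (mem_leftInvSet (q := (a, b)) |>.mpr ⟨hab, h⟩))).2.not_gt
        (Fin.lt_def.mpr (ha'.trans_le hb))
    exact (not_lt.mp hσab).lt_of_ne (σ⁻¹.injective.ne hab.ne)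
  have := card_le_card hsub
  rw [card_lettersFrom, card_lettersFrom] at this
  have := (σ⁻¹ a).isLt
  omega

lemma insertMax_subset_iff {σ τ : Perm (Fin n)} {p m : Fin (n + 1)} (hτ : IsDirectSumAt τ m) :
    leftInvSet (insertMax σ p) ⊆ leftInvSet (insertMax τ m) ↔
      leftInvSet σ ⊆ leftInvSet τ ∧ m ≤ p := by
  rw [leftInvSet_insertMax_subset_iff, Fin.le_def]
  exact ⟨fun h => ⟨h.1, le_of_lettersFrom_subset p.is_le m.is_le h.2⟩,
    fun h => ⟨h.1, lettersFrom_subset_of_le hτ h.1 h.2⟩⟩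

lemma lt_cval_iff (π : Perm (Fin n)) (i : Fin n) (d : ℕ) :
    d < cval π i ↔ (i : ℕ) + d < n ∧ ∀ j : Fin n, i < j → (j : ℕ) ≤ i + d → π j < π i := by
  simp only [cval, lt_min'_iff, forall_mem_insert, forall_mem_image, mem_filter, mem_univ,
    true_and, and_imp]
  refine and_congr (by omega) (forall_congr' fun j => forall_congr' fun hij => ?_)
  have hij' : (i : ℕ) < j := hij
  rcases (π.injective.ne hij.ne').lt_or_gt with h | h
  · simp [h, h.not_gt]
  · simp [h, h.not_gt]
    omega

lemma val_succAbove (p : Fin (n + 1)) (i : Fin n) :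
    (p.succAbove i : ℕ) = if (i : ℕ) < p then (i : ℕ) else i + 1 := by
  rw [Fin.succAbove]
  split_ifs <;> simp_all [Fin.lt_def]

lemma cval_insertMax_self (τ : Perm (Fin n)) (m : Fin (n + 1)) :
    cval (insertMax τ m) m = n + 1 - m := by
  refine eq_of_forall_lt_iff fun d => ?_
  have hlt : ∀ j, m < j → insertMax τ m j < insertMax τ m m := fun j hj => by
    rw [insertMax_apply_self]
    exact (Fin.le_last _).lt_of_ne (by simpa using (insertMax τ m).injective.ne hj.ne')
  rw [lt_cval_iff, and_iff_left fun j hj _ => hlt j hj]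
  omega

lemma cval_insertMax_succAbove {τ : Perm (Fin n)} {m : Fin (n + 1)} (hτ : IsDirectSumAt τ m)
    (j : Fin n) : cval (insertMax τ m) (m.succAbove j) = cval τ j := by
  refine eq_of_forall_lt_iff fun d => ?_
  rw [lt_cval_iff, lt_cval_iff, Fin.forall_iff_succAbove m]
  simp only [insertMax_apply_self, insertMax_apply_succAbove,
    (Fin.strictMono_succAbove m).lt_iff_lt, (Fin.le_last _).not_gt, imp_false, not_le, Fin.lt_def,
    Fin.val_castSucc, val_succAbove]
  by_cases hjm : (j : ℕ) < m
  · simp only [hjm, if_true, true_implies]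
    constructor
    · rintro ⟨-, hjd, h⟩
      exact ⟨by omega, fun k hjk hkd => h k hjk (by rwa [if_pos (by omega)])⟩
    · rintro ⟨hjd, h⟩
      -- the letter at position `m` of `τ` exceeds `τ j`, so the window cannot reach it
      have hjdm : (j : ℕ) + d < m := by
        by_contra! hmd
        have := h ⟨m, by omega⟩ hjm hmd
        have := Fin.lt_def.mp (hτ j ⟨m, by omega⟩ hjm le_rfl)
        omega
      refine ⟨by omega, hjdm, fun k hjk hkd => h k hjk ?_⟩
      split_ifs at hkd <;> omega
  · simp only [hjm, if_false]
    constructor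
    · rintro ⟨hjd, -, h⟩
      exact ⟨by omega, fun k hjk hkd => h k hjk (by rw [if_neg (by omega)]; omega)⟩
    · rintro ⟨hjd, h⟩
      exact ⟨by omega, by omega, fun k hjk hkd => h k hjk (by rw [if_neg (by omega)] at hkd; omega)⟩

lemma sum_filter_le_reflect {M : Type*} [AddCommMonoid M] (f : ℕ → M) (m : Fin (n + 1)) :
    ∑ p ∈ univ.filter (m ≤ ·), f (n - p) = ∑ t ∈ range (n + 1 - m), f t := by
  have := sum_map (Ici m) Fin.valEmbedding fun k => f (n - k)
  rw [Fin.map_valEmbedding_Ici, sum_Ico_reflect f _ le_rfl, Nat.sub_self, ← range_eq_Ico] at this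
  rw [filter_le_eq_Ici]
  exact this.symm

lemma FLam_eq_sum (π : Perm (Fin n)) :
    FLam π = ∑ u, if leftInvSet u ⊆ leftInvSet π then X ^ invCount u else 0 := by
  classical
  simp only [FLam, sum_filter, wle_iff_subset]

lemma FLam_insertMax {τ : Perm (Fin n)} {m : Fin (n + 1)} (hτ : IsDirectSumAt τ m) :
    FLam (insertMax τ m) = FLam τ * ∑ t ∈ range (n + 1 - m), X ^ t := by
  rw [FLam_eq_sum, FLam_eq_sum, ← sum_filter_le_reflect, ← insertMax_bijective.sum_comp,
    Fintype.sum_prod_type, sum_mul_sum]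
  refine sum_congr rfl fun σ _ => ?_
  simp only [sum_filter, insertMax_subset_iff hτ, invCount_insertMax, pow_add, ite_and]
  by_cases hσ : leftInvSet σ ⊆ leftInvSet τ <;> simp [hσ]

lemma prod_cval_insertMax {τ : Perm (Fin n)} {m : Fin (n + 1)} (hτ : IsDirectSumAt τ m) :
    ∏ i, ∑ t ∈ range (cval (insertMax τ m) i), (X : ℤ[X]) ^ t =
      (∑ t ∈ range (n + 1 - m), X ^ t) * ∏ j, ∑ t ∈ range (cval τ j), X ^ t := by
  simp only [Fin.prod_univ_succAbove _ m, cval_insertMax_self, cval_insertMax_succAbove hτ]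

def Avoids231 (π : Perm (Fin n)) : Prop :=
  ¬ ∃ i j k : Fin n, i < j ∧ j < k ∧ π k < π i ∧ π i < π j

lemma Avoids231.isDirectSumAt {τ : Perm (Fin n)} {m : Fin (n + 1)}
    (h : Avoids231 (insertMax τ m)) : IsDirectSumAt τ m := by
  intro j j' hj hj'
  refine lt_of_not_ge fun hle => h ⟨m.succAbove j, m, m.succAbove j', ?_, ?_, ?_, ?_⟩
  · exact (Fin.succAbove_lt_iff_castSucc_lt m j).mpr (Fin.lt_def.mpr hj)
  · exact (Fin.lt_succAbove_iff_le_castSucc m j').mpr (Fin.le_def.mpr hj')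
  · rw [insertMax_apply_succAbove, insertMax_apply_succAbove, Fin.castSucc_lt_castSucc_iff]
    exact hle.lt_of_ne (τ.injective.ne (Fin.ne_of_val_ne (by omega)))
  · simp

lemma Avoids231.of_insertMax {τ : Perm (Fin n)} {m : Fin (n + 1)}
    (h : Avoids231 (insertMax τ m)) : Avoids231 τ := fun ⟨i, j, k, hij, hjk, hki, hij'⟩ =>
  h ⟨m.succAbove i, m.succAbove j, m.succAbove k, Fin.strictMono_succAbove m hij,
    Fin.strictMono_succAbove m hjk, by simpa using hki, by simpa using hij'⟩

/-- For a 231-avoiding `π ∈ S_n`,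
`F(Λ_π, q) = ∏_{i=1}^n [c_i]` where `[k] = 1 + q + ⋯ + q^{k-1}`. -/
theorem FLam_eq_prod_cval (n : ℕ) (π : Equiv.Perm (Fin n))
    (h231 : ¬ ∃ i j k : Fin n, i < j ∧ j < k ∧ π k < π i ∧ π i < π j) :
    FLam π = ∏ i : Fin n, ∑ t ∈ Finset.range (cval π i), (X : Polynomial ℤ) ^ t := by
  induction n with
  | zero => simp [FLam_eq_sum, invCount]
  | succ n ih =>
    obtain ⟨⟨τ, m⟩, rfl⟩ := insertMax_bijective.surjective π
    have hτ := Avoids231.isDirectSumAt h231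
    rw [FLam_insertMax hτ, ih τ (Avoids231.of_insertMax h231), prod_cval_insertMax hτ, mul_comm]

end SepPerm
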